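/- Let 0 < β ≤ 1 and let a be a function supported in B(0,R) such that A_β(a)(y,t) ≤ K R^{n+β}/t^{n+β} for all (y,t) ∈ ℝ^{n+1}_+. If |x| ≥ 2R, then the intrinsic Lusin area function satisfies S_β(a)(x) ≤ C K R^{n+β} |x|^{−(n+β)}, where C depends only on n and β. -/

import Mathlib

open MeasureTheory Metric Set

noncomputable section

/-- `ℝⁿ` as a Euclidean space. -/
abbrev Rn (n : ℕ) : Type := EuclideanSpace ℝ (Fin n)

variable {n : ℕ}

/-- Weighted measure of a set: `w(E) = ∫_E w`. -/
def wMeas (w : Rn n → ℝ) (s : Set (Rn n)) : ℝ := ∫ x in s, w x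

/-- The Muckenhoupt `A₁` condition with constant `C`. -/
def IsA1 (w : Rn n → ℝ) (C : ℝ) : Prop :=
  (∀ x, 0 ≤ w x) ∧ MeasureTheory.LocallyIntegrable w ∧
    ∀ (x₀ : Rn n) (R : ℝ), 0 < R →
      (∫ x in ball x₀ R, w x) ≤
        C * (volume (ball x₀ R)).toReal * essInf w (volume.restrict (ball x₀ R))

/-- The Muckenhoupt `A_p` condition (`1 < p`) with constant `C`. -/
def IsAp (w : Rn n → ℝ) (p C : ℝ) : Prop :=
  (∀ x, 0 ≤ w x) ∧ MeasureTheory.LocallyIntegrable w ∧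
    ∀ (x₀ : Rn n) (R : ℝ), 0 < R →
      ((volume (ball x₀ R)).toReal⁻¹ * ∫ x in ball x₀ R, w x) *
        ((volume (ball x₀ R)).toReal⁻¹ * ∫ x in ball x₀ R, (w x) ^ (-(1 / (p - 1)))) ^ (p - 1)
        ≤ C

/-- The reverse Hölder condition `RH_r` with constant `C`. -/
def IsRH (w : Rn n → ℝ) (r C : ℝ) : Prop :=
  ∀ (x₀ : Rn n) (R : ℝ), 0 < R →
    ((volume (ball x₀ R)).toReal⁻¹ * ∫ x in ball x₀ R, (w x) ^ r) ^ (1 / r) ≤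
      C * ((volume (ball x₀ R)).toReal⁻¹ * ∫ x in ball x₀ R, w x)

/-- The class `C_β`: support in the closed unit ball, mean zero, β-Hölder with constant 1. -/
def MemCbeta (β : ℝ) (φ : Rn n → ℝ) : Prop :=
  (∀ x, φ x ≠ 0 → ‖x‖ ≤ 1) ∧ MeasureTheory.Integrable φ ∧ (∫ x, φ x) = 0 ∧
    ∀ x x' : Rn n, |φ x - φ x'| ≤ ‖x - x'‖ ^ β

/-- Convolution `f * φ_t (x)` with the dilation `φ_t(x) = t^{-n} φ(x/t)`. -/
def convPhi (f φ : Rn n → ℝ) (t : ℝ) (x : Rn n) : ℝ :=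
  ∫ y, f y * (t ^ (-(n : ℝ)) * φ (t⁻¹ • (x - y)))

/-- The intrinsic averaging function `A_β(f)(y,t) = sup_{φ ∈ C_β} |f * φ_t(y)|`. -/
def Abeta (β : ℝ) (f : Rn n → ℝ) (y : Rn n) (t : ℝ) : ℝ :=
  ⨆ φ : {φ : Rn n → ℝ // MemCbeta β φ}, |convPhi f φ.1 t y|

/-- The intrinsic Littlewood–Paley `g`-function. -/
def gbeta (β : ℝ) (f : Rn n → ℝ) (x : Rn n) : ℝ :=
  (∫ t in Ioi (0 : ℝ), (Abeta β f x t) ^ 2 / t) ^ (1 / 2 : ℝ)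

/-- The intrinsic Lusin area function of aperture `γ`. -/
def SbetaA (β γ : ℝ) (f : Rn n → ℝ) (x : Rn n) : ℝ :=
  (∫ p in {p : Rn n × ℝ | dist x p.1 < γ * p.2 ∧ 0 < p.2},
      (Abeta β f p.1 p.2) ^ 2 / p.2 ^ (n + 1)) ^ (1 / 2 : ℝ)

/-- The intrinsic `g^*_λ` function. -/
def gstar (lam β : ℝ) (f : Rn n → ℝ) (x : Rn n) : ℝ :=
  (∫ p in {p : Rn n × ℝ | 0 < p.2},
      (p.2 / (p.2 + dist x p.1)) ^ (lam * (n : ℝ)) * (Abeta β f p.1 p.2) ^ 2 / p.2 ^ (n + 1)) ^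
    (1 / 2 : ℝ)

/-- The weighted `L^q` norm `(∫ |g|^q w)^{1/q}`. -/
def wLq (q : ℝ) (w g : Rn n → ℝ) : ℝ := (∫ x, |g x| ^ q * w x) ^ (1 / q)

/-- The weighted Hardy–Littlewood maximal operator. -/
def Mw (w b : Rn n → ℝ) (x : Rn n) : ℝ :=
  ⨆ B : {B : Rn n × ℝ // 0 < B.2 ∧ x ∈ ball B.1 B.2},
    (wMeas w (ball B.1.1 B.1.2))⁻¹ * ∫ y in ball B.1.1 B.1.2, |b y| * w y

/-- A central `(α, q, 0; w₁, w₂)`-atom supported in `B(0,R)`. -/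
def IsCentralAtom (α q R : ℝ) (w₁ w₂ a : Rn n → ℝ) : Prop :=
  MeasureTheory.Integrable a ∧ (∀ x, a x ≠ 0 → x ∈ ball (0 : Rn n) R) ∧
    wLq q w₂ a ≤ (wMeas w₁ (ball (0 : Rn n) R)) ^ (-(α / (n : ℝ))) ∧
    (∫ x, a x) = 0

/-- The homogeneous weighted Herz norm `‖f‖_{\dot K^{α,p}_q(w₁,w₂)}`. -/
def herzNorm (α p q : ℝ) (w₁ w₂ f : Rn n → ℝ) : ℝ :=
  (∑' k : ℤ,
      (wMeas w₁ (closedBall (0 : Rn n) ((2 : ℝ) ^ k))) ^ (α * p / (n : ℝ)) *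
        ((∫ x in closedBall (0 : Rn n) ((2 : ℝ) ^ k) \ closedBall (0 : Rn n) ((2 : ℝ) ^ (k - 1)),
            |f x| ^ q * w₂ x) ^ (1 / q)) ^ p) ^ (1 / p)


/-!
For `‖x‖ ≥ 2R`, a point `(y, t)` of the cone `Γ(x)` with `t < ‖x‖/4` has `‖y‖ ≥ R + t`, so the
ball `B(y, t)` misses the support of `a` and `A_β(a)(y, t) = 0`. On the rest of the cone the
hypothesis bounds the integrand by `(K R^{n+β})² t^{-2(n+β)-n-1}`; integrating first over the
slice `B(x, t)`, of volume `|B₁| tⁿ`, leaves `|B₁| (K R^{n+β})² ∫_{‖x‖/4}^∞ t^{-2(n+β)-1} dt`,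
which is `|B₁| (K R^{n+β})² (‖x‖/4)^{-2(n+β)} / (2(n+β))`.
-/

def truncCone {E : Type*} [PseudoMetricSpace E] (x : E) (m : ℝ) : Set (E × ℝ) :=
  {p | m ≤ p.2 ∧ dist x p.1 < p.2}

theorem measurableSet_truncCone {E : Type*} [PseudoMetricSpace E] [MeasurableSpace E]
    [OpensMeasurableSpace E] (x : E) (m : ℝ) : MeasurableSet (truncCone x m) :=
  (measurableSet_le measurable_const measurable_snd).inter
    (measurableSet_lt (continuous_const.dist continuous_fst).measurable measurable_snd)

theorem indicator_truncCone_apply {E : Type*} [PseudoMetricSpace E] (x : E) (m : ℝ)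
    (g : ℝ → ℝ) (y : E) (t : ℝ) :
    (truncCone x m).indicator (fun p => g p.2) (y, t) =
      (ball x t).indicator (fun _ => (Ici m).indicator g t) y := by
  by_cases hm : m ≤ t <;> by_cases hy : dist x y < t <;>
    simp [indicator, truncCone, hm, hy, dist_comm y x]

section TruncCone

variable {E : Type*} [NormedAddCommGroup E] [NormedSpace ℝ E] [FiniteDimensional ℝ E]
  [MeasureSpace E] [BorelSpace E] [(volume : Measure E).IsAddHaarMeasure]

theorem integral_indicator_truncCone_slice (x : E) {m : ℝ} (hm : 0 < m) (g : ℝ → ℝ) (t : ℝ) :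
    ∫ y, (truncCone x m).indicator (fun p => g p.2) (y, t) =
      volume.real (ball (0 : E) 1) *
        (Ici m).indicator (fun t => t ^ Module.finrank ℝ E * g t) t := by
  simp_rw [indicator_truncCone_apply]
  rw [integral_indicator_const _ measurableSet_ball, smul_eq_mul]
  by_cases ht : t ∈ Ici m
  · rw [indicator_of_mem ht, indicator_of_mem ht, measureReal_def,
      Measure.addHaar_ball_of_pos _ _ (hm.trans_le ht), ENNReal.toReal_mul,
      ENNReal.toReal_ofReal (by positivity [hm.trans_le ht]), measureReal_def]
    ring
  · simp [indicator_of_notMem ht]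

theorem integrable_indicator_truncCone (x : E) {m : ℝ} (hm : 0 < m) {g : ℝ → ℝ}
    (hg : Measurable g) (hint : IntegrableOn (fun t => t ^ Module.finrank ℝ E * g t) (Ici m)) :
    Integrable ((truncCone x m).indicator fun p => g p.2) := by
  rw [Measure.volume_eq_prod]
  refine (integrable_prod_iff' ?_).2 ⟨ae_of_all _ fun t => ?_, ?_⟩
  · exact ((hg.comp measurable_snd).indicator (measurableSet_truncCone x m)).aestronglyMeasurable
  · simp_rw [indicator_truncCone_apply]
    exact (integrable_indicator_iff measurableSet_ball).2 (integrableOn_const measure_ball_lt_top.ne)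
  · simp_rw [norm_indicator_eq_indicator_norm]
    simp_rw [integral_indicator_truncCone_slice x hm fun t => ‖g t‖]
    refine ((integrable_indicator_iff measurableSet_Ici).2 ?_).const_mul _
    refine IntegrableOn.congr_fun hint.norm (fun t ht => ?_) measurableSet_Ici
    simp [abs_of_nonneg (hm.le.trans ht)]

theorem setIntegral_truncCone (x : E) {m : ℝ} (hm : 0 < m) {g : ℝ → ℝ}
    (hg : Measurable g) (hint : IntegrableOn (fun t => t ^ Module.finrank ℝ E * g t) (Ici m)) :
    ∫ p in truncCone x m, g p.2 =
      volume.real (ball (0 : E) 1) * ∫ t in Ici m, t ^ Module.finrank ℝ E * g t := by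
  have h := integrable_indicator_truncCone x hm hg hint
  rw [Measure.volume_eq_prod] at h
  rw [← integral_indicator (measurableSet_truncCone x m), Measure.volume_eq_prod,
    integral_prod_symm _ h]
  simp_rw [integral_indicator_truncCone_slice x hm]
  rw [integral_const_mul, integral_indicator measurableSet_Ici]

end TruncCone

theorem pow_mul_div_rpow_sq_div_pow_succ {t : ℝ} (ht : 0 < t) (c s : ℝ) :
    t ^ n * ((c / t ^ s) ^ 2 / t ^ (n + 1)) = c ^ 2 * t ^ (-(2 * s) - 1) := by
  rw [Real.rpow_sub ht, Real.rpow_neg ht.le, Real.rpow_one, mul_comm 2 s, Real.rpow_mul ht.le,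
    Real.rpow_two]
  field_simp
  ring

theorem integrableOn_Ici_pow_mul_div_rpow_sq_div_pow_succ {m s : ℝ} (hm : 0 < m) (hs : 0 < s)
    (c : ℝ) : IntegrableOn (fun t => t ^ n * ((c / t ^ s) ^ 2 / t ^ (n + 1))) (Ici m) := by
  rw [integrableOn_Ici_iff_integrableOn_Ioi]
  refine IntegrableOn.congr_fun ((integrableOn_Ioi_rpow_of_lt (by linarith) hm).const_mul (c ^ 2))
    (fun t ht => (pow_mul_div_rpow_sq_div_pow_succ (hm.trans ht) c s).symm) measurableSet_Ioi

theorem integral_Ici_pow_mul_div_rpow_sq_div_pow_succ {m s : ℝ} (hm : 0 < m) (hs : 0 < s)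
    (c : ℝ) :
    ∫ t in Ici m, t ^ n * ((c / t ^ s) ^ 2 / t ^ (n + 1)) = (c * m ^ (-s)) ^ 2 / (2 * s) := by
  rw [integral_Ici_eq_integral_Ioi,
    setIntegral_congr_fun measurableSet_Ioi
      (fun t ht => pow_mul_div_rpow_sq_div_pow_succ (hm.trans ht) c s),
    integral_const_mul, integral_Ioi_rpow_of_lt (by linarith) hm, sub_add_cancel, neg_div_neg_eq,
    mul_pow, ← Real.rpow_mul_natCast hm.le]
  ring_nf

theorem Abeta_nonneg (β : ℝ) (f : Rn n → ℝ) (y : Rn n) (t : ℝ) : 0 ≤ Abeta β f y t :=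
  Real.iSup_nonneg fun _ => abs_nonneg _

theorem convPhi_eq_zero_of_add_le_norm {a φ : Rn n → ℝ} {R t : ℝ} {y : Rn n}
    (ha : ∀ z, a z ≠ 0 → z ∈ ball (0 : Rn n) R) (hφ : ∀ x, φ x ≠ 0 → ‖x‖ ≤ 1) (ht : 0 < t)
    (hy : R + t ≤ ‖y‖) : convPhi a φ t y = 0 := by
  have hzero : ∀ z, a z * (t ^ (-(n : ℝ)) * φ (t⁻¹ • (y - z))) = 0 := by
    intro z
    by_contra h
    obtain ⟨haz, -, hφz⟩ := mul_ne_zero_iff.1 h |>.imp_right mul_ne_zero_iff.1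
    have hz : ‖z‖ < R := by simpa using ha z haz
    have hyz : ‖y - z‖ ≤ t := by
      have := hφ _ hφz
      rwa [norm_smul, norm_inv, Real.norm_of_nonneg ht.le, inv_mul_le_iff₀ ht, mul_one] at this
    have := norm_le_norm_add_norm_sub' y z
    linarith [norm_sub_rev y z]
  simp only [convPhi, hzero, integral_zero]

theorem Abeta_eq_zero_of_add_le_norm {β R t : ℝ} {a : Rn n → ℝ} {y : Rn n}
    (ha : ∀ z, a z ≠ 0 → z ∈ ball (0 : Rn n) R) (ht : 0 < t) (hy : R + t ≤ ‖y‖) :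
    Abeta β a y t = 0 := by
  have hconv : ∀ φ : {φ : Rn n → ℝ // MemCbeta β φ}, convPhi a φ.1 t y = 0 :=
    fun φ => convPhi_eq_zero_of_add_le_norm ha φ.2.1 ht hy
  simp [Abeta, hconv]

theorem add_le_norm_of_dist_lt {E : Type*} [SeminormedAddCommGroup E] {R t : ℝ} {x y : E}
    (hx : 2 * R ≤ ‖x‖) (hxy : dist x y < t) (htx : t < ‖x‖ / 4) : R + t ≤ ‖y‖ := by
  have := norm_le_norm_add_norm_sub' x y
  rw [dist_eq_norm] at hxy
  linarith

theorem setIntegral_cone_sq_Abeta_le {β K R : ℝ} {a : Rn n → ℝ} (hs : 0 < (n : ℝ) + β)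
    (hR : 0 < R) (ha : ∀ z, a z ≠ 0 → z ∈ ball (0 : Rn n) R)
    (hA : ∀ (y : Rn n) (t : ℝ), 0 < t → Abeta β a y t ≤ K * R ^ ((n : ℝ) + β) / t ^ ((n : ℝ) + β))
    {x : Rn n} (hx : 2 * R ≤ ‖x‖) :
    ∫ p in {p : Rn n × ℝ | dist x p.1 < 1 * p.2 ∧ 0 < p.2}, Abeta β a p.1 p.2 ^ 2 / p.2 ^ (n + 1) ≤
      volume.real (ball (0 : Rn n) 1) / (2 * ((n : ℝ) + β)) *
        (K * R ^ ((n : ℝ) + β) * (‖x‖ / 4) ^ (-((n : ℝ) + β))) ^ 2 := by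
  set s : ℝ := (n : ℝ) + β
  set m : ℝ := ‖x‖ / 4 with hm_def
  have hm : 0 < m := by rw [hm_def]; linarith
  set cone := {p : Rn n × ℝ | dist x p.1 < 1 * p.2 ∧ 0 < p.2}
  have hcone : MeasurableSet cone :=
    (measurableSet_lt (continuous_const.dist continuous_fst).measurable
      (measurable_const.mul measurable_snd)).inter (measurableSet_lt measurable_const measurable_snd)
  have hsub : truncCone x m ⊆ cone := fun p hp => ⟨by rw [one_mul]; exact hp.2, hm.trans_le hp.1⟩
  have hlow : ∀ p ∈ cone \ truncCone x m, Abeta β a p.1 p.2 ^ 2 / p.2 ^ (n + 1) = 0 := by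
    rintro ⟨y, t⟩ ⟨⟨hxy, ht⟩, hT⟩
    rw [one_mul] at hxy
    have htm : t < m := not_le.1 fun h => hT ⟨h, hxy⟩
    simp [Abeta_eq_zero_of_add_le_norm ha ht (add_le_norm_of_dist_lt hx hxy htm)]
  set g : ℝ → ℝ := fun t => (K * R ^ s / t ^ s) ^ 2 / t ^ (n + 1)
  have hg : Measurable g := by fun_prop
  have hint : IntegrableOn (fun t => t ^ Module.finrank ℝ (Rn n) * g t) (Ici m) := by
    simpa [finrank_euclideanSpace_fin] using
      integrableOn_Ici_pow_mul_div_rpow_sq_div_pow_succ hm hs (K * R ^ s)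
  have hT := measurableSet_truncCone x m
  calc ∫ p in cone, Abeta β a p.1 p.2 ^ 2 / p.2 ^ (n + 1)
      = ∫ p in truncCone x m, Abeta β a p.1 p.2 ^ 2 / p.2 ^ (n + 1) :=
        setIntegral_eq_of_subset_of_forall_sdiff_eq_zero hcone hsub hlow
    _ ≤ ∫ p in truncCone x m, g p.2 := by
        refine integral_mono_of_nonneg ?_ ?_ ?_
        · exact (ae_restrict_iff' hT).2 (ae_of_all _ fun p hp =>
            div_nonneg (sq_nonneg _) (pow_nonneg (hm.le.trans hp.1) _))
        · exact (integrable_indicator_iff hT).1 (integrable_indicator_truncCone x hm hg hint)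
        · refine (ae_restrict_iff' hT).2 (ae_of_all _ fun p hp => ?_)
          have ht : 0 < p.2 := hm.trans_le hp.1
          simp only [g]
          gcongr
          exacts [Abeta_nonneg _ _ _ _, hA _ _ ht]
    _ = volume.real (ball (0 : Rn n) 1) / (2 * s) * (K * R ^ s * m ^ (-s)) ^ 2 := by
        rw [setIntegral_truncCone x hm hg hint, finrank_euclideanSpace_fin,
          integral_Ici_pow_mul_div_rpow_sq_div_pow_succ hm hs]
        ring

theorem stmt6_general (β : ℝ) (hβ : 0 < β) :
    ∃ C > 0, ∀ (K R : ℝ) (a : Rn n → ℝ), 0 < R → 0 ≤ K →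
      (∀ x, a x ≠ 0 → x ∈ ball (0 : Rn n) R) →
      (∀ (y : Rn n) (t : ℝ), 0 < t → Abeta β a y t ≤ K * R ^ ((n : ℝ) + β) / t ^ ((n : ℝ) + β)) →
      ∀ x : Rn n, 2 * R ≤ ‖x‖ →
        SbetaA β 1 a x ≤ C * K * R ^ ((n : ℝ) + β) * ‖x‖ ^ (-((n : ℝ) + β)) := by
  have hs : 0 < (n : ℝ) + β := by positivity
  have hvol : 0 < volume.real (ball (0 : Rn n) 1) :=
    ENNReal.toReal_pos (measure_ball_pos _ _ one_pos).ne' measure_ball_lt_top.ne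
  have hsq := Real.sq_sqrt (div_nonneg hvol.le (mul_nonneg zero_le_two hs.le))
  refine ⟨Real.sqrt (volume.real (ball (0 : Rn n) 1) / (2 * ((n : ℝ) + β))) * 4 ^ ((n : ℝ) + β),
    by positivity, ?_⟩
  intro K R a hR hK ha hA x hx
  have hx0 : 0 < ‖x‖ := by linarith
  have hquarter : (‖x‖ / 4) ^ (-((n : ℝ) + β)) = 4 ^ ((n : ℝ) + β) * ‖x‖ ^ (-((n : ℝ) + β)) := by
    rw [Real.div_rpow hx0.le (by norm_num), Real.rpow_neg (by norm_num : (0 : ℝ) ≤ 4), div_inv_eq_mul,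
      mul_comm]
  rw [SbetaA, ← Real.sqrt_eq_rpow, Real.sqrt_le_iff]
  refine ⟨by positivity, (setIntegral_cone_sq_Abeta_le hs hR ha hA hx).trans_eq ?_⟩
  rw [hquarter]
  nth_rewrite 1 [← hsq]
  ring

/-- far-field decay of the intrinsic Lusin area function:
`S_β(a)(x) ≤ C K R^{n+β} |x|^{-(n+β)}` for `|x| ≥ 2R`. -/
theorem stmt6 (β : ℝ) (hβ : 0 < β) (hβ1 : β ≤ 1) :
    ∃ C > 0, ∀ (K R : ℝ) (a : Rn n → ℝ), 0 < R → 0 ≤ K →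
      (∀ x, a x ≠ 0 → x ∈ ball (0 : Rn n) R) →
      (∀ (y : Rn n) (t : ℝ), 0 < t → Abeta β a y t ≤ K * R ^ ((n : ℝ) + β) / t ^ ((n : ℝ) + β)) →
      ∀ x : Rn n, 2 * R ≤ ‖x‖ →
        SbetaA β 1 a x ≤ C * K * R ^ ((n : ℝ) + β) * ‖x‖ ^ (-((n : ℝ) + β)) :=
  stmt6_general β hβ
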